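/- The Korányi gauge |ξ|_{ℍⁿ} = (|z|⁴ + t²)^{1/4} on the Heisenberg group ℍⁿ satisfies the triangle inequality: |ξ ∘ η|_{ℍⁿ} ≤ |ξ|_{ℍⁿ} + |η|_{ℍⁿ} for all ξ, η ∈ ℍⁿ. -/

import Mathlib

open MeasureTheory Real Filter Topology

noncomputable section

abbrev H (n : ℕ) : Type :=
  EuclideanSpace ℝ (Fin n) × EuclideanSpace ℝ (Fin n) × ℝ

namespace Heis

variable {n : ℕ}

/-- Heisenberg group law. -/
def mul (a b : H n) : H n :=
  (a.1 + b.1, a.2.1 + b.2.1,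
    a.2.2 + b.2.2 + 2 * (inner ℝ a.2.1 b.1 : ℝ) - 2 * (inner ℝ a.1 b.2.1 : ℝ))

/-- Group inverse. -/
def inv (a : H n) : H n := (-a.1, -a.2.1, -a.2.2)

/-- Anisotropic dilations. -/
def dil (l : ℝ) (a : H n) : H n := (l • a.1, l • a.2.1, l ^ 2 * a.2.2)

/-- Korányi gauge. -/
def knorm (a : H n) : ℝ :=
  ((‖a.1‖ ^ 2 + ‖a.2.1‖ ^ 2) ^ 2 + a.2.2 ^ 2) ^ ((1 : ℝ) / 4)

/-- Korányi ball. -/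
def ball (ξ₀ : H n) (r : ℝ) : Set (H n) := {ξ | knorm (mul (inv ξ₀) ξ) < r}

/-- Homogeneous dimension. -/
def Q (n : ℕ) : ℝ := 2 * n + 2

end Heis



section Aux

lemma quarter (x : ℝ) (hx : 0 ≤ x) : x ^ ((1:ℝ)/4) = Real.sqrt (Real.sqrt x) := by
  rw [Real.sqrt_eq_rpow, Real.sqrt_eq_rpow, ← Real.rpow_mul hx]
  norm_num

lemma key (a b α β p q : ℝ) (ha : 0 ≤ a) (hb : 0 ≤ b) (hpq : p^2 + q^2 ≤ a*b) :
    ((a+b+2*p)^2 + (α+β+2*q)^2) ^ ((1:ℝ)/4)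
      ≤ (a^2+α^2)^((1:ℝ)/4) + (b^2+β^2)^((1:ℝ)/4) := by
  set A : ℂ := ⟨a, α⟩ with hA
  set B : ℂ := ⟨b, β⟩ with hB
  set C : ℂ := ⟨p, q⟩ with hC
  have hsum : A + B + 2*C = ⟨a+b+2*p, α+β+2*q⟩ := by
    simp [A, B, C, Complex.ext_iff]
  have habsA : ‖A‖ = Real.sqrt (a^2 + α^2) := by
    rw [Complex.norm_def, Complex.normSq_mk]; ring_nf
  have habsB : ‖B‖ = Real.sqrt (b^2 + β^2) := by
    rw [Complex.norm_def, Complex.normSq_mk]; ring_nf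
  have habsC : ‖C‖ ≤ Real.sqrt a * Real.sqrt b := by
    rw [Complex.norm_def, Complex.normSq_mk, ← Real.sqrt_mul ha]
    apply Real.sqrt_le_sqrt; nlinarith
  have hAa : a ≤ ‖A‖ := by
    rw [habsA]
    calc a = Real.sqrt (a^2) := by rw [Real.sqrt_sq ha]
    _ ≤ _ := by apply Real.sqrt_le_sqrt; nlinarith
  have hBb : b ≤ ‖B‖ := by
    rw [habsB]
    calc b = Real.sqrt (b^2) := by rw [Real.sqrt_sq hb]
    _ ≤ _ := by apply Real.sqrt_le_sqrt; nlinarith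
  have htri : ‖A + B + 2*C‖ ≤ ‖A‖ + ‖B‖ + 2 * ‖C‖ :=
    calc ‖A + B + 2*C‖ ≤ ‖A+B‖ + ‖2*C‖ := norm_add_le _ _
    _ ≤ ‖A‖ + ‖B‖ + 2 * ‖C‖ := by
        simp only [norm_mul, Complex.norm_two]
        gcongr; exact norm_add_le _ _
  have hmain : ‖A + B + 2*C‖
      ≤ (Real.sqrt (‖A‖) + Real.sqrt (‖B‖))^2 := by
    have h1 : Real.sqrt a * Real.sqrt b ≤ Real.sqrt (‖A‖) * Real.sqrt (‖B‖) :=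
      mul_le_mul (Real.sqrt_le_sqrt hAa) (Real.sqrt_le_sqrt hBb) (Real.sqrt_nonneg b) (Real.sqrt_nonneg _)
    have h2 : Real.sqrt (‖A‖) ^ 2 = ‖A‖ := Real.sq_sqrt (norm_nonneg A)
    have h3 : Real.sqrt (‖B‖) ^ 2 = ‖B‖ := Real.sq_sqrt (norm_nonneg B)
    nlinarith [htri, habsC]
  -- conclude
  have hx : (0:ℝ) ≤ (a+b+2*p)^2 + (α+β+2*q)^2 := by positivity
  rw [quarter _ hx, quarter _ (by positivity), quarter _ (by positivity)]
  have hLHS : Real.sqrt ((a+b+2*p)^2 + (α+β+2*q)^2) = ‖A+B+2*C‖ := by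
    rw [hsum, Complex.norm_def, Complex.normSq_mk]; ring_nf
  rw [hLHS, ← habsA, ← habsB]
  calc Real.sqrt (‖A+B+2*C‖)
      ≤ Real.sqrt ((Real.sqrt (‖A‖) + Real.sqrt (‖B‖))^2) :=
        Real.sqrt_le_sqrt hmain
    _ = _ := Real.sqrt_sq (by positivity)


lemma cs {n : ℕ} (x y x' y' : EuclideanSpace ℝ (Fin n)) :
    ((inner ℝ x x' : ℝ) + (inner ℝ y y' : ℝ))^2 + ((inner ℝ y x' : ℝ) - (inner ℝ x y' : ℝ))^2
      ≤ (‖x‖^2 + ‖y‖^2) * (‖x'‖^2 + ‖y'‖^2) := by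
  set z : EuclideanSpace ℂ (Fin n) := WithLp.toLp 2 (fun i => (⟨x i, y i⟩ : ℂ)) with hz
  set w : EuclideanSpace ℂ (Fin n) := WithLp.toLp 2 (fun i => (⟨x' i, y' i⟩ : ℂ)) with hw
  have hinner : (inner ℂ z w : ℂ) =
      ⟨(inner ℝ x x' : ℝ) + (inner ℝ y y' : ℝ), (inner ℝ x y' : ℝ) - (inner ℝ y x' : ℝ)⟩ := by
    simp [PiLp.inner_apply, RCLike.inner_apply, hz, hw, Complex.ext_iff, Complex.conj_re,
      neg_add_eq_sub, Finset.sum_sub_distrib, ← Finset.sum_add_distrib, mul_comm]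
  have hzn : ‖z‖^2 = ‖x‖^2 + ‖y‖^2 := by
    rw [EuclideanSpace.norm_eq z, EuclideanSpace.norm_eq x, EuclideanSpace.norm_eq y,
      Real.sq_sqrt (by positivity), Real.sq_sqrt (by positivity), Real.sq_sqrt (by positivity)]
    simp [hz, Complex.norm_def, Complex.sq_norm, Complex.normSq_mk, Real.norm_eq_abs,
      sq_abs, Finset.sum_add_distrib, sq]
    rw [← Finset.sum_add_distrib]; exact Finset.sum_congr rfl fun i _ => Real.mul_self_sqrt (add_nonneg (mul_self_nonneg _) (mul_self_nonneg _))
  have hwn : ‖w‖^2 = ‖x'‖^2 + ‖y'‖^2 := by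
    rw [EuclideanSpace.norm_eq w, EuclideanSpace.norm_eq x', EuclideanSpace.norm_eq y',
      Real.sq_sqrt (by positivity), Real.sq_sqrt (by positivity), Real.sq_sqrt (by positivity)]
    simp [hw, Complex.norm_def, Complex.sq_norm, Complex.normSq_mk, Real.norm_eq_abs,
      sq_abs, Finset.sum_add_distrib, sq]
    rw [← Finset.sum_add_distrib]; exact Finset.sum_congr rfl fun i _ => Real.mul_self_sqrt (add_nonneg (mul_self_nonneg _) (mul_self_nonneg _))
  have hcs : ‖(inner ℂ z w : ℂ)‖ ≤ ‖z‖ * ‖w‖ := norm_inner_le_norm z w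
  have h2 : ‖(inner ℂ z w : ℂ)‖^2 ≤ (‖z‖ * ‖w‖)^2 := pow_le_pow_left₀ (norm_nonneg _) hcs 2
  rw [Complex.sq_norm, hinner, Complex.normSq_mk] at h2
  calc ((inner ℝ x x' : ℝ) + (inner ℝ y y' : ℝ))^2 + ((inner ℝ y x' : ℝ) - (inner ℝ x y' : ℝ))^2
      = ((inner ℝ x x' : ℝ) + (inner ℝ y y' : ℝ)) * ((inner ℝ x x' : ℝ) + (inner ℝ y y' : ℝ))
        + ((inner ℝ x y' : ℝ) - (inner ℝ y x' : ℝ)) * ((inner ℝ x y' : ℝ) - (inner ℝ y x' : ℝ)) := by ring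
    _ ≤ (‖z‖ * ‖w‖)^2 := h2
    _ = ‖z‖^2 * ‖w‖^2 := by ring
    _ = _ := by rw [hzn, hwn]

end Aux

/-- The Korányi gauge satisfies the triangle inequality. -/
theorem stmt1 {n : ℕ} (ξ η : H n) :
    Heis.knorm (Heis.mul ξ η) ≤ Heis.knorm ξ + Heis.knorm η := by
  obtain ⟨x, y, t⟩ := ξ
  obtain ⟨x', y', s⟩ := η
  unfold Heis.knorm Heis.mul
  simp only
  have e1 : ‖x + x'‖^2 = ‖x‖^2 + 2 * (inner ℝ x x' : ℝ) + ‖x'‖^2 := norm_add_sq_real x x'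
  have e2 : ‖y + y'‖^2 = ‖y‖^2 + 2 * (inner ℝ y y' : ℝ) + ‖y'‖^2 := norm_add_sq_real y y'
  calc ((‖x + x'‖ ^ 2 + ‖y + y'‖ ^ 2) ^ 2
          + (t + s + 2 * (inner ℝ y x' : ℝ) - 2 * (inner ℝ x y' : ℝ)) ^ 2) ^ ((1:ℝ)/4)
      = (((‖x‖^2 + ‖y‖^2) + (‖x'‖^2 + ‖y'‖^2)
            + 2 * ((inner ℝ x x' : ℝ) + (inner ℝ y y' : ℝ))) ^ 2
          + (t + s + 2 * ((inner ℝ y x' : ℝ) - (inner ℝ x y' : ℝ))) ^ 2) ^ ((1:ℝ)/4) := by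
        rw [e1, e2]; congr 2 <;> ring
    _ ≤ ((‖x‖^2 + ‖y‖^2)^2 + t^2) ^ ((1:ℝ)/4) + ((‖x'‖^2 + ‖y'‖^2)^2 + s^2) ^ ((1:ℝ)/4) := by
        apply key _ _ _ _ _ _ (by positivity) (by positivity)
        exact cs x y x' y'
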